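/- The tensor-reverse operator J^q on the q-deformed Fock space, defined by J^q(ξ_1⊗…⊗ξ_k) = ξ_k⊗…⊗ξ_1, is a unitary operator (with respect to the q-inner product), and J^q L_i^q J^q = R_i^q for each i. -/

import Mathlib

open Finset

/-- The algebraic q-deformed Fock space over `ℂ^n`. -/
abbrev FockSpace (n : ℕ) := List (Fin n) →₀ ℂ

/-- The number of inversions of a permutation of `Fin k`. -/
def invCount {k : ℕ} (σ : Equiv.Perm (Fin k)) : ℕ :=
  ((Finset.univ : Finset (Fin k × Fin k)).filter fun p => p.1 < p.2 ∧ σ p.2 < σ p.1).card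

/-- The q-inner product of two basis tensors (words): zero unless the lengths agree,
otherwise `Σ_σ q^{inv σ} Π_m ⟨e_{w(σ m)}, e_{v(m)}⟩`. -/
noncomputable def qbWord (q : ℝ) {n : ℕ} (w v : List (Fin n)) : ℂ :=
  if h : w.length = v.length then
    ∑ σ : Equiv.Perm (Fin w.length), (q : ℂ) ^ invCount σ *
      ∏ m : Fin w.length, (if w.get (σ m) = v.get (Fin.cast h m) then (1 : ℂ) else 0)
  else 0

/-- The q-inner product on the q-deformed Fock space, extended sesquilinearly. -/
noncomputable def qip (q : ℝ) {n : ℕ} (x y : FockSpace n) : ℂ :=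
  ∑ w ∈ x.support, ∑ v ∈ y.support, (starRingEnd ℂ) (x w) * y v * qbWord q w v

/-- The left creation operator `L_i^q : ξ ↦ e_i ⊗ ξ`. -/
noncomputable def creL (n : ℕ) (i : Fin n) : FockSpace n →ₗ[ℂ] FockSpace n :=
  Finsupp.lmapDomain ℂ ℂ (fun w : List (Fin n) => i :: w)

/-- The right creation operator `R_i^q : ξ ↦ ξ ⊗ e_i`. -/
noncomputable def creR (n : ℕ) (i : Fin n) : FockSpace n →ₗ[ℂ] FockSpace n :=
  Finsupp.lmapDomain ℂ ℂ (fun w : List (Fin n) => w ++ [i])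

/-- The tensor-reverse operator `J^q(ξ_1⊗…⊗ξ_k) = ξ_k⊗…⊗ξ_1`. -/
noncomputable def revJ (n : ℕ) : FockSpace n →ₗ[ℂ] FockSpace n :=
  Finsupp.lmapDomain ℂ ℂ (fun w : List (Fin n) => w.reverse)

/-! Reversal is a bijection of words, so `J` permutes the basis, and it suffices that
`⟨w, v⟩_q` is reversal-invariant for basis words. Conjugating `σ ∈ S_k` by the reversal
`m ↦ k - 1 - m` preserves the inversion number (an inversion `(a, b)` goes to `(rev b, rev a)`),
so reindexing the sum over `σ` and the product over `m` by the reversal gives the invariance. -/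

noncomputable def qbTuple (q : ℝ) {n k : ℕ} (f g : Fin k → Fin n) : ℂ :=
  ∑ σ : Equiv.Perm (Fin k),
    (q : ℂ) ^ invCount σ * ∏ m, (if f (σ m) = g m then (1 : ℂ) else 0)

lemma qbWord_eq_qbTuple (q : ℝ) {n : ℕ} {w v : List (Fin n)} (h : w.length = v.length) :
    qbWord q w v = qbTuple q w.get (v.get ∘ Fin.cast h) :=
  dif_pos h

lemma invCount_permCongr_revPerm {k : ℕ} (σ : Equiv.Perm (Fin k)) :
    invCount (Fin.revPerm.permCongr σ) = invCount σ := by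
  unfold invCount
  refine Finset.card_bij' (fun p _ => (Fin.rev p.2, Fin.rev p.1))
    (fun p _ => (Fin.rev p.2, Fin.rev p.1)) ?_ ?_ ?_ ?_
  all_goals
    rintro ⟨a, b⟩ hab
    simp_all [Fin.rev_lt_rev]

lemma qbTuple_comp_cast (q : ℝ) {n k k' : ℕ} (h : k = k') (f g : Fin k' → Fin n) :
    qbTuple q (f ∘ Fin.cast h) (g ∘ Fin.cast h) = qbTuple q f g := by
  subst h
  rfl

lemma qbTuple_comp_rev (q : ℝ) {n k : ℕ} (f g : Fin k → Fin n) :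
    qbTuple q (f ∘ Fin.rev) (g ∘ Fin.rev) = qbTuple q f g := by
  refine Fintype.sum_equiv Fin.revPerm.permCongr _ _ fun σ => ?_
  rw [invCount_permCongr_revPerm]
  congr 1
  exact Fintype.prod_equiv Fin.revPerm _ _ fun m => by simp

lemma qbWord_reverse (q : ℝ) {n : ℕ} (w v : List (Fin n)) :
    qbWord q w.reverse v.reverse = qbWord q w v := by
  by_cases h : w.length = v.length
  · have hw : w.reverse.length = w.length := List.length_reverse
    have h' : w.reverse.length = v.reverse.length := by simp [h]
    have hrev (u : List (Fin n)) :
        u.reverse.get = u.get ∘ Fin.rev ∘ Fin.cast List.length_reverse := by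
      funext j
      simp only [Function.comp_apply, List.get_eq_getElem, List.getElem_reverse]
      congr 1
      simp only [Fin.val_rev, Fin.val_cast]
      omega
    calc qbWord q w.reverse v.reverse
        = qbTuple q ((w.get ∘ Fin.rev) ∘ Fin.cast hw)
            (((v.get ∘ Fin.cast h) ∘ Fin.rev) ∘ Fin.cast hw) := by
          rw [qbWord_eq_qbTuple q h', hrev, hrev]
          congr 1
          funext j
          simp only [Function.comp_apply, List.get_eq_getElem]
          congr 1
          simp only [Fin.val_rev, Fin.val_cast, h]
      _ = qbTuple q w.get (v.get ∘ Fin.cast h) := by rw [qbTuple_comp_cast, qbTuple_comp_rev]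
      _ = qbWord q w v := (qbWord_eq_qbTuple q h).symm
  · rw [qbWord, qbWord, dif_neg (by simpa using h), dif_neg h]

lemma qip_mapDomain (q : ℝ) {n : ℕ} {e : List (Fin n) → List (Fin n)} (he : e.Injective)
    (hqb : ∀ w v, qbWord q (e w) (e v) = qbWord q w v) (x y : FockSpace n) :
    qip q (x.mapDomain e) (y.mapDomain e) = qip q x y := by
  simp only [qip, Finsupp.mapDomain_support_of_injective he, Finset.sum_image he.injOn,
    Finsupp.mapDomain_apply he, hqb]

lemma qip_revJ (q : ℝ) {n : ℕ} (x y : FockSpace n) :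
    qip q (revJ n x) (revJ n y) = qip q x y :=
  qip_mapDomain q List.reverse_injective (qbWord_reverse q) x y

lemma revJ_comp_revJ (n : ℕ) : revJ n ∘ₗ revJ n = LinearMap.id :=
  Finsupp.lhom_ext fun w b => by simp [revJ, Finsupp.mapDomain_single]

lemma revJ_comp_creL_comp_revJ (n : ℕ) (i : Fin n) :
    revJ n ∘ₗ creL n i ∘ₗ revJ n = creR n i :=
  Finsupp.lhom_ext fun w b => by simp [revJ, creL, creR, Finsupp.mapDomain_single]

theorem revJ_unitary_and_conjugates_general (n : ℕ) (q : ℝ) :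
    (∀ x y : FockSpace n, qip q (revJ n x) (revJ n y) = qip q x y) ∧
      revJ n ∘ₗ revJ n = LinearMap.id ∧
      ∀ i : Fin n, revJ n ∘ₗ creL n i ∘ₗ revJ n = creR n i :=
  ⟨qip_revJ q, revJ_comp_revJ n, revJ_comp_creL_comp_revJ n⟩

/-- the tensor-reverse operator `J^q` is unitary with respect to the
q-inner product (it preserves `⟨·,·⟩_q` and is its own inverse, hence bijective), and
`J^q L_i^q J^q = R_i^q` for each `i`. -/
theorem revJ_unitary_and_conjugates (n : ℕ) (q : ℝ) (hq : |q| < 1) :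
    (∀ x y : FockSpace n, qip q (revJ n x) (revJ n y) = qip q x y) ∧
      revJ n ∘ₗ revJ n = LinearMap.id ∧
      ∀ i : Fin n, revJ n ∘ₗ creL n i ∘ₗ revJ n = creR n i :=
  revJ_unitary_and_conjugates_general n q
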